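/- A metrizable topological group containing an f_1*-productive sequence contains a subspace homeomorphic to the Cantor set. -/

import Mathlib

open Filter Topology

def partProd {G : Type*} [Monoid G] (b : ℕ → G) (n : ℕ) : G :=
  ((List.range n).map b).prod

def F1StarProductive {G : Type*} [Group G] [TopologicalSpace G] (a : ℕ → G) : Prop :=
  Function.Injective a ∧
    ∀ μ : ℕ → ℕ, StrictMono μ →
      ∃ x : G, Tendsto (fun k => partProd (fun i => a (μ i)) (k + 1)) atTop (𝓝 x)

/-! Products along subsequences of an `f_1*`-productive sequence `a` become uniformly small far
out: otherwise one could glue infinitely many disjoint blocks with products outside a fixed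
neighbourhood of `1` into one subsequence whose partial products do not converge. This uniform
smallness makes `x ↦ lim_k ∏_{i ≤ k} a (2 i + x i)` a continuous map from `2^ℕ` to `G`, and the
injectivity of `a` shows that flipping one coordinate of `x` changes the value. By the Baire
category theorem the image is then uncountable; being compact and metrizable, it contains a
Cantor set. -/

section PartProd

variable {M : Type*} [Monoid M]

lemma partProd_add (b : ℕ → M) (m n : ℕ) :
    partProd b (m + n) = partProd b m * partProd (fun j => b (m + j)) n := by
  simp [partProd, List.range_add, List.map_map, Function.comp_def]

lemma partProd_succ (b : ℕ → M) (n : ℕ) : partProd b (n + 1) = partProd b n * b n := by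
  simp [partProd, List.range_succ]

lemma partProd_congr {b c : ℕ → M} {n : ℕ} (h : ∀ i < n, b i = c i) :
    partProd b n = partProd c n :=
  congrArg List.prod (List.map_congr_left fun i hi => h i (List.mem_range.mp hi))

lemma partProd_comp (a : ℕ → M) (ν : ℕ → ℕ) (n : ℕ) :
    partProd (fun i => a (ν i)) n = (((List.range n).map ν).map a).prod := by
  rw [partProd, List.map_map]
  rfl

end PartProd

section TopologicalGroup

variable {G : Type*} [Group G] [TopologicalSpace G] [IsTopologicalGroup G]

lemma tendsto_partProd_shift {b : ℕ → G} {y : G} (hb : Tendsto (partProd b) atTop (𝓝 y))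
    (m : ℕ) :
    Tendsto (partProd fun j => b (m + j)) atTop (𝓝 ((partProd b m)⁻¹ * y)) := by
  refine (((tendsto_add_atTop_iff_nat m).2 hb).const_mul (partProd b m)⁻¹).congr fun n => ?_
  rw [add_comm, partProd_add, inv_mul_cancel_left]

lemma eq_of_tendsto_partProd [T2Space G] {b c : ℕ → G} {y : G} {m : ℕ}
    (hbc : ∀ i ≠ m, b i = c i) (hb : Tendsto (partProd b) atTop (𝓝 y))
    (hc : Tendsto (partProd c) atTop (𝓝 y)) : b m = c m := by
  have htail : (partProd fun j => b (m + 1 + j)) = partProd fun j => c (m + 1 + j) :=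
    funext fun n => partProd_congr fun j _ => hbc _ (by omega)
  have hhead : partProd b (m + 1) = partProd c (m + 1) := by
    have h := tendsto_nhds_unique (tendsto_partProd_shift hb (m + 1))
      (htail ▸ tendsto_partProd_shift hc (m + 1))
    simpa using h
  rwa [partProd_succ, partProd_succ, partProd_congr fun i hi => hbc i hi.ne,
    mul_right_inj] at hhead

end TopologicalGroup

lemma exists_strictMono_map_range_eq {α : Type*} [Preorder α] [Inhabited α] {P : ℕ → List α}
    (hprefix : ∀ m, P m <+: P (m + 1)) (hlen : ∀ m, m ≤ (P m).length)
    (hsorted : ∀ m, (P m).Pairwise (· < ·)) :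
    ∃ ν : ℕ → α, StrictMono ν ∧ ∀ m, (List.range (P m).length).map ν = P m := by
  have hchain : ∀ {m m'}, m ≤ m' → P m <+: P m' := by
    intro m m' h
    induction h with
    | refl => exact List.prefix_refl _
    | step _ ih => exact ih.trans (hprefix _)
  have hν : ∀ m n (hn : n < (P m).length), (P (n + 1)).getD n default = (P m)[n] := by
    intro m n hn
    have hn' : n < (P (n + 1)).length := hlen (n + 1)
    rw [List.getD_eq_getElem _ _ hn']
    rcases le_total (n + 1) m with h | h
    · exact (hchain h).getElem hn'
    · exact ((hchain h).getElem hn).symm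
  refine ⟨fun n => (P (n + 1)).getD n default, ?_, fun m => ?_⟩
  · refine strictMono_nat_of_lt_succ fun n => ?_
    have h2 := hlen (n + 2)
    rw [hν (n + 2) n (by omega), hν (n + 2) (n + 1) (by omega)]
    exact List.pairwise_iff_getElem.mp (hsorted (n + 2)) _ _ _ _ (Nat.lt_succ_self n)
  · exact List.ext_getElem (by simp) fun n _ hn => by
      simpa only [List.getElem_map, List.getElem_range] using hν m n hn

lemma exists_strictMono_map_range_eq_flatMap {l : ℕ → List ℕ} (hne : ∀ n, l n ≠ [])
    (hsorted : ∀ n, (l n).Pairwise (· < ·)) (hge : ∀ n, ∀ m ∈ l n, n ≤ m) :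
    ∃ N len ν : ℕ → ℕ, StrictMono ν ∧ Tendsto len atTop atTop ∧
      ∀ m, (List.range (len m)).map ν = (List.range m).flatMap fun k => l (N k) := by
  -- the entries of the `k`-th block `l (N k)` lie in `[N k, N (k + 1))`
  set N : ℕ → ℕ := fun k => (fun n => (l n).sum + 1)^[k] 0
  have hNsucc : ∀ k, N (k + 1) = (l (N k)).sum + 1 := fun k =>
    Function.iterate_succ_apply' _ _ _
  set P : ℕ → List ℕ := fun m => (List.range m).flatMap fun k => l (N k) with hP
  have hPsucc : ∀ m, P (m + 1) = P m ++ l (N m) := fun m => by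
    simp [hP, List.range_succ, List.flatMap_append]
  have hinv : ∀ m, (P m).Pairwise (· < ·) ∧ (∀ x ∈ P m, x < N m) ∧ m ≤ (P m).length := by
    intro m
    induction m with
    | zero => simp [hP]
    | succ m ih =>
      obtain ⟨ih_sorted, ih_lt, ih_len⟩ := ih
      have hsum : ∀ x ∈ l (N m), x < N (m + 1) := fun x hx =>
        hNsucc m ▸ Nat.lt_succ_of_le (List.le_sum_of_mem hx)
      have hNle : N m ≤ N (m + 1) := by
        obtain ⟨x, hx⟩ := List.exists_mem_of_ne_nil _ (hne (N m))
        exact (hge _ x hx).trans (hsum x hx).le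
      rw [hPsucc]
      refine ⟨List.pairwise_append.2 ⟨ih_sorted, hsorted _, fun x hx y hy =>
        (ih_lt x hx).trans_le (hge _ y hy)⟩, ?_, ?_⟩
      · simp only [List.mem_append]
        rintro x (hx | hx)
        exacts [(ih_lt x hx).trans_le hNle, hsum x hx]
      · have := List.length_pos_iff.2 (hne (N m))
        simp only [List.length_append]
        omega
  obtain ⟨ν, hν, hνP⟩ := exists_strictMono_map_range_eq
    (fun m => hPsucc m ▸ List.prefix_append _ _) (fun m => (hinv m).2.2) fun m => (hinv m).1
  exact ⟨N, fun m => (P m).length, ν, hν,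
    tendsto_atTop_mono (fun m => (hinv m).2.2) tendsto_id, hνP⟩

section Productive

variable {G : Type*} [Group G] [TopologicalSpace G] {a : ℕ → G}

lemma F1StarProductive.tendsto_partProd (ha : F1StarProductive a) {μ : ℕ → ℕ}
    (hμ : StrictMono μ) : ∃ x, Tendsto (partProd fun i => a (μ i)) atTop (𝓝 x) :=
  (ha.2 μ hμ).imp fun _ hx => (tendsto_add_atTop_iff_nat 1).mp hx

lemma F1StarProductive.exists_forall_prod_mem [IsTopologicalGroup G] (ha : F1StarProductive a)
    {U : Set G} (hU : U ∈ 𝓝 1) :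
    ∃ N, ∀ l : List ℕ, l.Pairwise (· < ·) → (∀ m ∈ l, N ≤ m) → (l.map a).prod ∈ U := by
  by_contra! hcon
  choose l hsorted hge hnotin using hcon
  have hne : ∀ N, l N ≠ [] := fun N h => hnotin N (by simpa [h] using mem_of_mem_nhds hU)
  obtain ⟨N, len, ν, hν, hlen, hνl⟩ := exists_strictMono_map_range_eq_flatMap hne hsorted hge
  obtain ⟨x, hx⟩ := ha.tendsto_partProd hν
  set Q : ℕ → G := fun m => (((List.range m).flatMap fun k => l (N k)).map a).prod with hQ
  have hQx : Tendsto Q atTop (𝓝 x) :=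
    (hx.comp hlen).congr fun m => by simp only [Function.comp_apply, partProd_comp, hνl, hQ]
  have hblock : Tendsto (fun m => ((l (N m)).map a).prod) atTop (𝓝 1) := by
    have h := hQx.inv.mul ((tendsto_add_atTop_iff_nat 1).2 hQx)
    rw [inv_mul_cancel] at h
    refine h.congr fun m => ?_
    simp only [hQ, List.range_succ, List.flatMap_append, List.flatMap_singleton, List.map_append,
      List.prod_append, inv_mul_cancel_left]
  obtain ⟨m, hm⟩ := (hblock.eventually_mem hU).exists
  exact hnotin _ hm

end Productive

section CantorMap

variable {G : Type*} [Group G] [TopologicalSpace G] [IsTopologicalGroup G] {a : ℕ → G}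

lemma inv_partProd_mul_mem_of_forall_prod_mem {V : Set G} (hV : IsClosed V) {N : ℕ}
    (hN : ∀ l : List ℕ, l.Pairwise (· < ·) → (∀ m ∈ l, N ≤ m) → (l.map a).prod ∈ V)
    {μ : ℕ → ℕ} (hμ : StrictMono μ) {y : G}
    (hy : Tendsto (partProd fun i => a (μ i)) atTop (𝓝 y)) :
    (partProd (fun i => a (μ i)) N)⁻¹ * y ∈ V := by
  refine hV.mem_of_tendsto (tendsto_partProd_shift hy N) (Eventually.of_forall fun t => ?_)
  have hsorted : ((List.range t).map fun j => μ (N + j)).Pairwise (· < ·) :=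
    List.pairwise_lt_range.map _ fun i j hij => hμ (by omega)
  have hge : ∀ m ∈ (List.range t).map fun j => μ (N + j), N ≤ m := by
    simp only [List.mem_map]
    rintro _ ⟨j, -, rfl⟩
    exact (Nat.le_add_right N j).trans (hμ.id_le _)
  simpa only [partProd_comp a fun j => μ (N + j)] using hN _ hsorted hge

lemma strictMono_bit (x : ℕ → Bool) : StrictMono fun n => Nat.bit (x n) n :=
  fun _ _ h => Nat.bit_lt_bit _ _ h

/-- The point of `G` coded by `x : ℕ → Bool`: the product of `a (2 n + x n)` over all `n`. -/
noncomputable def F1StarProductive.cantorMap (ha : F1StarProductive a) (x : ℕ → Bool) : G :=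
  (ha.tendsto_partProd (strictMono_bit x)).choose

omit [IsTopologicalGroup G] in
lemma F1StarProductive.tendsto_cantorMap (ha : F1StarProductive a) (x : ℕ → Bool) :
    Tendsto (partProd fun n => a (Nat.bit (x n) n)) atTop (𝓝 (ha.cantorMap x)) :=
  (ha.tendsto_partProd (strictMono_bit x)).choose_spec

lemma F1StarProductive.continuous_cantorMap (ha : F1StarProductive a) :
    Continuous ha.cantorMap := by
  refine continuous_iff_continuousAt.2 fun x => ?_
  suffices Tendsto (fun y => (ha.cantorMap x)⁻¹ * ha.cantorMap y) (𝓝 x) (𝓝 1) by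
    simpa [ContinuousAt] using this.const_mul (ha.cantorMap x)
  intro W hW
  rw [Filter.mem_map]
  obtain ⟨V, hV, hVclosed, hVinv, hVW⟩ := exists_closed_nhds_one_inv_eq_mul_subset hW
  obtain ⟨N, hN⟩ := ha.exists_forall_prod_mem hV
  have htail : ∀ y, (partProd (fun n => a (Nat.bit (y n) n)) N)⁻¹ * ha.cantorMap y ∈ V :=
    fun y => inv_partProd_mul_mem_of_forall_prod_mem hVclosed hN (strictMono_bit y)
      (ha.tendsto_cantorMap y)
  have hnear : ∀ᶠ y in 𝓝 x, ∀ i ∈ Finset.range N, y i = x i :=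
    (Finset.eventually_all _).2 fun i _ =>
      (continuous_apply i).continuousAt.eventually_mem ((isOpen_discrete {x i}).mem_nhds rfl)
  filter_upwards [hnear] with y hy
  have hprefix : partProd (fun n => a (Nat.bit (y n) n)) N =
      partProd (fun n => a (Nat.bit (x n) n)) N :=
    partProd_congr fun i hi => by rw [hy i (Finset.mem_range.2 hi)]
  have hmem := Set.mul_mem_mul (hVinv ▸ Set.inv_mem_inv.2 (htail x)) (htail y)
  rw [hprefix, mul_inv_rev, inv_inv, mul_assoc, mul_inv_cancel_left] at hmem
  exact hVW hmem

lemma F1StarProductive.cantorMap_update_ne [T2Space G] (ha : F1StarProductive a)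
    (x : ℕ → Bool) (m : ℕ) : ha.cantorMap (Function.update x m (!x m)) ≠ ha.cantorMap x := by
  intro h
  have hfactor := eq_of_tendsto_partProd (m := m)
    (fun i hi => by rw [Function.update_of_ne hi]) (h ▸ ha.tendsto_cantorMap _)
    (ha.tendsto_cantorMap x)
  have hbit := congrArg Nat.bodd (ha.1 hfactor)
  simp [Nat.bodd_bit] at hbit

end CantorMap

lemma not_countable_range_of_update_ne {X : Type*} [TopologicalSpace X] [T1Space X]
    {f : (ℕ → Bool) → X} (hf : Continuous f)
    (hflip : ∀ x n, f (Function.update x n (!x n)) ≠ f x) : ¬(Set.range f).Countable := by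
  intro hcount
  have : Countable (Set.range f) := hcount.to_subtype
  have hcover : ⋃ c : Set.range f, f ⁻¹' {(c : X)} = Set.univ :=
    Set.eq_univ_of_forall fun x => Set.mem_iUnion.2 ⟨⟨f x, x, rfl⟩, rfl⟩
  obtain ⟨c, y, hy⟩ := nonempty_interior_of_iUnion_of_closed
    (fun c => isClosed_singleton.preimage hf) hcover
  have hflips : Tendsto (fun n => Function.update y n (!y n)) atTop (𝓝 y) :=
    tendsto_pi_nhds.2 fun i => tendsto_const_nhds.congr' <|
      (eventually_gt_atTop i).mono fun n hn => (Function.update_of_ne hn.ne _ _).symm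
  obtain ⟨n, hn⟩ := (hflips.eventually_mem (isOpen_interior.mem_nhds hy)).exists
  have hfn : Function.update y n (!y n) ∈ f ⁻¹' {(c : X)} := interior_subset hn
  have hfy : y ∈ f ⁻¹' {(c : X)} := interior_subset hy
  rw [Set.mem_preimage, Set.mem_singleton_iff] at hfn hfy
  exact hflip y n (hfn.trans hfy.symm)

lemma exists_homeomorph_cantor_of_isCompact {X : Type*} [TopologicalSpace X]
    [TopologicalSpace.MetrizableSpace X] {K : Set X} (hK : IsCompact K) (hunc : ¬K.Countable) :
    ∃ s : Set X, Nonempty (s ≃ₜ (ℕ → Bool)) := by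
  let := TopologicalSpace.metrizableSpaceMetric X
  have : CompactSpace K := isCompact_iff_compactSpace.mp hK
  obtain ⟨f, -, hf, hinj⟩ := isClosed_univ.exists_nat_bool_injection_of_not_countable (α := K)
    (by rwa [Set.countable_univ_iff, Set.countable_coe_iff])
  have hemb := ((continuous_subtype_val.comp hf).isClosedEmbedding
    (Subtype.val_injective.comp hinj)).isEmbedding
  exact ⟨_, ⟨hemb.toHomeomorph.symm⟩⟩

/-- A metrizable topological group containing an `f_1*`-productive sequence contains a
subspace homeomorphic to the Cantor set `2^ℕ`. -/
theorem stmt_14 {G : Type*} [Group G] [TopologicalSpace G] [IsTopologicalGroup G]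
    [TopologicalSpace.MetrizableSpace G]
    (a : ℕ → G) (ha : F1StarProductive a) :
    ∃ s : Set G, Nonempty (s ≃ₜ (ℕ → Bool)) :=
  exists_homeomorph_cantor_of_isCompact (isCompact_range ha.continuous_cantorMap)
    (not_countable_range_of_update_ne ha.continuous_cantorMap ha.cantorMap_update_ne)
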